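/- arXiv:1706.07980 — 5 statements merged into one kernel-verified Lean document; each statement's English description precedes it below -/
import Mathlib

section
/- Let Ω ⊂ ℝⁿ be Lebesgue measurable, k ∈ ℕ, and f : Ω → ℝ measurable. Suppose that for every compact subset K ⊆ Ω and every ε > 0 there exists g ∈ C^k(ℝⁿ) with Lᵑ({x ∈ K : f(x) ≠ g(x)}) ≤ ε. Then for every ε > 0 there exists g ∈ C^k(ℝⁿ) with Lᵑ({x ∈ Ω : f(x) ≠ g(x)}) ≤ ε. -/
/-!
Cut the space into the disjoint open shells `m + 1/2 < ‖x‖ < m + 3/2`, which form a locally finite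
family and miss only a null union of spheres. In the `m`-th shell, inner regularity and the
hypothesis give a compact `Kₘ ⊆ Ω` and a `C^k` function `gₘ` that agrees with `f` on all of
`Ω ∩ shell` outside a set of measure `δₘ`, where `∑ δₘ ≤ ε`. Smooth cut-offs equal to `1` on `Kₘ`
and supported in the `m`-th shell glue the `gₘ` into one `C^k` function.
-/

open MeasureTheory Set Function Filter
open scoped Manifold ENNReal NNReal

section NormShell

variable {E : Type*} [NormedAddCommGroup E]

-- The radii are offset by `1/2` so that no boundary sphere is the sphere of radius `0`, which is
-- not null in dimension `0`.
def normShell (m : ℤ) : Set E := (‖·‖) ⁻¹' Ioo (2⁻¹ + m : ℝ) (2⁻¹ + m + 1)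

theorem isOpen_normShell (m : ℤ) : IsOpen (normShell m : Set E) :=
  isOpen_Ioo.preimage continuous_norm

theorem pairwise_disjoint_normShell : Pairwise (Disjoint on (normShell : ℤ → Set E)) :=
  fun _ _ hij => (pairwise_disjoint_Ioo_add_intCast (2⁻¹ : ℝ) hij).preimage _

theorem locallyFinite_normShell : LocallyFinite (normShell : ℤ → Set E) :=
  (locallyFinite_Ioo_of_tendsto (tendsto_atTop_add_const_left _ _ tendsto_intCast_atTop_atTop)
    (tendsto_atBot_add_const_right _ _ <| tendsto_atBot_add_const_left _ _ <|
      tendsto_intCast_atBot_iff.mpr tendsto_id)).preimage_continuous continuous_norm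

theorem normShell_subset_ball (m : ℤ) : (normShell m : Set E) ⊆ Metric.ball 0 (2⁻¹ + m + 1) :=
  fun _ hx => mem_ball_zero_iff.mpr hx.2

theorem exists_mem_normShell_or_mem_sphere (x : E) :
    (∃ m, x ∈ normShell m) ∨ ∃ m : ℤ, x ∈ Metric.sphere 0 (2⁻¹ + m) := by
  obtain ⟨m, hm⟩ := mem_iUnion.mp (iUnion_Ico_add_intCast (2⁻¹ : ℝ) ▸ mem_univ ‖x‖)
  by_cases hx : ‖x‖ ∈ Ioo (2⁻¹ + m : ℝ) (2⁻¹ + m + 1)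
  · exact .inl ⟨m, hx⟩
  · refine .inr ⟨m, mem_sphere_zero_iff_norm.mpr ?_⟩
    rw [← mem_singleton_iff, ← Ico_sdiff_Ioo_same (lt_add_one _)]
    exact ⟨hm, hx⟩

theorem measure_normShell_lt_top [ProperSpace E] [MeasurableSpace E] (μ : Measure E)
    [IsFiniteMeasureOnCompacts μ] (m : ℤ) : μ (normShell m) < ∞ :=
  (measure_mono (normShell_subset_ball m)).trans_lt measure_ball_lt_top

theorem ae_exists_mem_normShell [NormedSpace ℝ E] [MeasurableSpace E] [BorelSpace E]
    [FiniteDimensional ℝ E] (μ : Measure E) [μ.IsAddHaarMeasure] :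
    ∀ᵐ x ∂μ, ∃ m, x ∈ (normShell m : Set E) := by
  refine ae_iff.mpr (measure_mono_null (fun x hx => ?_) (measure_iUnion_null fun m : ℤ =>
    μ.addHaar_sphere_of_ne_zero 0 (r := 2⁻¹ + m) ?_))
  · exact mem_iUnion.mpr ((exists_mem_normShell_or_mem_sphere x).resolve_left hx)
  · have : (1 + 2 * m : ℤ) ≠ 0 := by omega
    contrapose! this
    exact_mod_cast (by linarith : (1 + 2 * m : ℝ) = 0)

end NormShell

theorem exists_isCompact_measure_sdiff_setOf_eq_le {X β : Type*} [TopologicalSpace X]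
    [MeasurableSpace X] [OpensMeasurableSpace X] [T2Space X] {μ : Measure X}
    [μ.InnerRegularCompactLTTop] {P : (X → β) → Prop} {f : X → β} {A : Set X}
    (hA : MeasurableSet A) (hμA : μ A ≠ ∞)
    (h : ∀ K ⊆ A, IsCompact K → ∀ ε : ℝ, 0 < ε →
      ∃ g, P g ∧ μ {x ∈ K | f x ≠ g x} ≤ ENNReal.ofReal ε)
    {δ : ℝ≥0} (hδ : 0 < δ) :
    ∃ K ⊆ A, IsCompact K ∧ ∃ g, P g ∧ μ (A \ {x ∈ K | f x = g x}) ≤ δ := by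
  obtain ⟨K, hKA, hK, hAK⟩ :=
    hA.exists_isCompact_sdiff_lt hμA (ε := ↑(δ / 2)) (by simpa using hδ.ne')
  obtain ⟨g, hg, hKg⟩ := h K hKA hK (δ / 2 : ℝ≥0) (by simpa using hδ)
  rw [ENNReal.ofReal_coe_nnreal] at hKg
  have hsub : A \ {x ∈ K | f x = g x} ⊆ (A \ K) ∪ {x ∈ K | f x ≠ g x} := by
    rintro x ⟨hxA, hx⟩
    by_cases hxK : x ∈ K
    · exact .inr ⟨hxK, fun hfg => hx ⟨hxK, hfg⟩⟩
    · exact .inl ⟨hxA, hxK⟩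
  refine ⟨K, hKA, hK, g, hg, ?_⟩
  calc μ (A \ {x ∈ K | f x = g x}) ≤ μ (A \ K) + μ {x ∈ K | f x ≠ g x} :=
        (measure_mono hsub).trans (measure_union_le _ _)
    _ ≤ ↑(δ / 2) + ↑(δ / 2) := add_le_add hAK.le hKg
    _ = δ := by rw [← ENNReal.coe_add, add_halves]

theorem exists_contDiff_eqOn_of_pairwise_disjoint {ι E F : Type*} [NormedAddCommGroup E]
    [NormedSpace ℝ E] [FiniteDimensional ℝ E] [NormedAddCommGroup F] [NormedSpace ℝ F]
    {n : ℕ∞} {U K : ι → Set E} (hU : ∀ i, IsOpen (U i)) (hUdisj : Pairwise (Disjoint on U))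
    (hUlf : LocallyFinite U) (hK : ∀ i, IsClosed (K i)) (hKU : ∀ i, K i ⊆ U i)
    {g : ι → E → F} (hg : ∀ i, ContDiff ℝ n (g i)) :
    ∃ G : E → F, ContDiff ℝ n G ∧ ∀ i, EqOn G (g i) (K i) := by
  choose χ hχ _ hχU hχK using fun i =>
    exists_contMDiff_support_eq_eq_one_iff 𝓘(ℝ, E) (n := n) (hU i) (hK i) (hKU i)
  have hsupp : ∀ i, support (fun x => χ i x • g i x) ⊆ U i :=
    fun i => (support_smul_subset_left _ _).trans (hχU i).subset
  refine ⟨fun x => ∑ᶠ i, χ i x • g i x, ?_, fun i x hx => ?_⟩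
  · exact contMDiff_iff_contDiff.mp <| contMDiff_finsum
      (fun i => (hχ i).smul (contMDiff_iff_contDiff.mpr (hg i))) (hUlf.subset hsupp)
  · dsimp only
    rw [finsum_eq_single _ i fun j hji => ?_, (hχK i x).mp hx, one_smul]
    exact notMem_support.mp fun hj => (hUdisj hji).le_bot ⟨hsupp j hj, hKU i hx⟩

theorem lusin_on_compacta_suffices_general (n k : ℕ) (Ω : Set (EuclideanSpace ℝ (Fin n)))
    (hΩ : MeasurableSet Ω) (f : EuclideanSpace ℝ (Fin n) → ℝ)
    (h : ∀ K : Set (EuclideanSpace ℝ (Fin n)), K ⊆ Ω → IsCompact K →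
      ∀ ε : ℝ, 0 < ε → ∃ g : EuclideanSpace ℝ (Fin n) → ℝ, ContDiff ℝ k g ∧
        volume {x ∈ K | f x ≠ g x} ≤ ENNReal.ofReal ε) :
    ∀ ε : ℝ, 0 < ε → ∃ g : EuclideanSpace ℝ (Fin n) → ℝ, ContDiff ℝ k g ∧
      volume {x ∈ Ω | f x ≠ g x} ≤ ENNReal.ofReal ε := by
  intro ε hε
  obtain ⟨δ, hδ, hδε⟩ := ENNReal.exists_pos_sum_of_countable (ENNReal.ofReal_pos.mpr hε).ne' ℤ
  have hpiece (m : ℤ) : ∃ K ⊆ Ω ∩ normShell m, IsCompact K ∧ ∃ g, ContDiff ℝ k g ∧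
      volume ((Ω ∩ normShell m) \ {x ∈ K | f x = g x}) ≤ δ m :=
    exists_isCompact_measure_sdiff_setOf_eq_le (hΩ.inter (isOpen_normShell m).measurableSet)
      (measure_inter_lt_top_of_right_ne_top (measure_normShell_lt_top volume m).ne).ne
      (fun K hK => h K (hK.trans inter_subset_left)) (hδ m)
  choose K hKΩ hK g hg hgK using hpiece
  obtain ⟨G, hG, hGK⟩ := exists_contDiff_eqOn_of_pairwise_disjoint (n := k) isOpen_normShell
    pairwise_disjoint_normShell locallyFinite_normShell (fun m => (hK m).isClosed)
    (fun m => (hKΩ m).trans inter_subset_right) hg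
  refine ⟨G, hG, ?_⟩
  calc volume {x ∈ Ω | f x ≠ G x}
      ≤ volume (⋃ m, (Ω ∩ normShell m) \ {x ∈ K m | f x = g m x}) := by
        refine measure_mono_ae ?_
        filter_upwards [ae_exists_mem_normShell volume] with x ⟨m, hm⟩ ⟨hxΩ, hfG⟩
        exact mem_iUnion.mpr ⟨m, ⟨hxΩ, hm⟩, fun hx => hfG (hx.2.trans (hGK m hx.1).symm)⟩
    _ ≤ ∑' m, (δ m : ℝ≥0∞) := (measure_iUnion_le _).trans (ENNReal.tsum_le_tsum hgK)
    _ ≤ ENNReal.ofReal ε := hδε.le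

theorem lusin_on_compacta_suffices (n k : ℕ) (Ω : Set (EuclideanSpace ℝ (Fin n)))
    (hΩ : MeasurableSet Ω) (f : EuclideanSpace ℝ (Fin n) → ℝ) (hf : Measurable f)
    (h : ∀ K : Set (EuclideanSpace ℝ (Fin n)), K ⊆ Ω → IsCompact K →
      ∀ ε : ℝ, 0 < ε → ∃ g : EuclideanSpace ℝ (Fin n) → ℝ, ContDiff ℝ k g ∧
        volume {x ∈ K | f x ≠ g x} ≤ ENNReal.ofReal ε) :
    ∀ ε : ℝ, 0 < ε → ∃ g : EuclideanSpace ℝ (Fin n) → ℝ, ContDiff ℝ k g ∧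
      volume {x ∈ Ω | f x ≠ g x} ≤ ENNReal.ofReal ε :=
  lusin_on_compacta_suffices_general n k Ω hΩ f h
end

section
/- Let A ⊂ ℝⁿ be measurable, x a point of Lebesgue density 1 of A, and ζ ∈ ℝⁿ with ζ ≠ 0. Then the cone C = {x + tv : t > 0, |v| = 1, ⟨ζ, v⟩ ≤ −|ζ|/2} satisfies liminf_{r→0⁺} Lᵑ(A ∩ C ∩ B(x,r))/Lᵑ(B(x,r)) > 0; in particular there is a sequence in A ∩ C converging to x. -/
open MeasureTheory Filter Metric
open scoped RealInnerProductSpace Pointwise ENNReal Topology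

/-!
Up to translation by `x`, the set `C` is a cone `K` whose trace on the unit ball has nonempty
interior. By scaling, `B(x,r) \ C` occupies the same fraction `d < 1` of `B(x,r)` for every
`r > 0`, and since `A ∩ B(x,r) ⊆ (A ∩ C ∩ B(x,r)) ∪ (B(x,r) \ C)`, the density of `A ∩ C` at the
density point `x` of `A` is at least `1 - d > 0`. Positive density puts `x` in the closure of `A ∩ C`.
-/

theorem le_liminf_measure_inter_div {α ι : Type*} [MeasurableSpace α] {μ : Measure α}
    {l : Filter ι} [l.NeBot] {A K : Set α} {B : ι → Set α} {d : ℝ≥0∞}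
    (hA : Tendsto (fun i => μ (A ∩ B i) / μ (B i)) l (𝓝 1))
    (hK : ∀ᶠ i in l, μ (B i \ K) / μ (B i) ≤ d) :
    1 - d ≤ liminf (fun i => μ (A ∩ K ∩ B i) / μ (B i)) l := by
  have hlower : ∀ᶠ i in l, μ (A ∩ B i) / μ (B i) - d ≤ μ (A ∩ K ∩ B i) / μ (B i) := by
    filter_upwards [hK] with i hi
    rw [tsub_le_iff_right]
    calc μ (A ∩ B i) / μ (B i)
        ≤ (μ (A ∩ K ∩ B i) + μ (B i \ K)) / μ (B i) := by
          refine ENNReal.div_le_div_right ((measure_mono ?_).trans (measure_union_le _ _)) _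
          intro y ⟨hyA, hyB⟩
          by_cases hyK : y ∈ K
          exacts [Or.inl ⟨⟨hyA, hyK⟩, hyB⟩, Or.inr ⟨hyB, hyK⟩]
      _ = μ (A ∩ K ∩ B i) / μ (B i) + μ (B i \ K) / μ (B i) := ENNReal.div_add_div_same.symm
      _ ≤ μ (A ∩ K ∩ B i) / μ (B i) + d := by gcongr
  have hlim : Tendsto (fun i => μ (A ∩ B i) / μ (B i) - d) l (𝓝 (1 - d)) :=
    ENNReal.Tendsto.sub hA tendsto_const_nhds (Or.inl ENNReal.one_ne_top)
  exact hlim.liminf_eq.symm.le.trans (liminf_le_liminf hlower)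

theorem measure_diff_lt_self_of_nonempty_interior {X : Type*} [TopologicalSpace X]
    [MeasurableSpace X] [OpensMeasurableSpace X] {μ : Measure X} [μ.IsOpenPosMeasure]
    {s t : Set X} (h : (interior (s ∩ t)).Nonempty) (hs : μ s ≠ ∞) : μ (s \ t) < μ s := by
  set U := interior (s ∩ t)
  have hUs : U ⊆ s := interior_subset.trans Set.inter_subset_left
  have hUpos : 0 < μ U := isOpen_interior.measure_pos μ h
  calc μ (s \ t) ≤ μ (s \ U) :=
        measure_mono (Set.sdiff_subset_sdiff_right (interior_subset.trans Set.inter_subset_right))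
    _ = μ s - μ U :=
        measure_sdiff hUs isOpen_interior.nullMeasurableSet (ne_top_of_le_ne_top hs (measure_mono hUs))
    _ < μ s := ENNReal.sub_lt_self hs (hUpos.trans_le (measure_mono hUs)).ne' hUpos.ne'

theorem mem_closure_of_liminf_measure_inter_closedBall_div_pos {X : Type*} [PseudoMetricSpace X]
    [MeasurableSpace X] (μ : Measure X) {s : Set X} {x : X}
    (h : 0 < liminf (fun r => μ (s ∩ closedBall x r) / μ (closedBall x r)) (𝓝[>] 0)) :
    x ∈ closure s := by
  refine Metric.mem_closure_iff.2 fun ε hε => ?_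
  obtain ⟨r, hr, hrε⟩ := ((eventually_lt_of_lt_liminf h).and (Ioo_mem_nhdsGT hε)).exists
  obtain ⟨y, hys, hyx⟩ := nonempty_of_measure_ne_zero (ENNReal.div_pos_iff.1 hr).1
  exact ⟨y, hys, (mem_closedBall'.1 hyx).trans_lt hrε.2⟩

theorem addHaar_closedBall_diff_vadd_cone_div {E : Type*} [NormedAddCommGroup E]
    [NormedSpace ℝ E] [MeasurableSpace E] [BorelSpace E] [FiniteDimensional ℝ E]
    (μ : Measure E) [μ.IsAddHaarMeasure] {K : Set E} (hK : ∀ c : ℝ, 0 < c → c • K = K)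
    (x : E) {r : ℝ} (hr : 0 < r) :
    μ (closedBall x r \ (x +ᵥ K)) / μ (closedBall x r) =
      μ (closedBall 0 1 \ K) / μ (closedBall 0 1) := by
  have hset : closedBall x r \ (x +ᵥ K) = x +ᵥ r • (closedBall 0 1 \ K) := by
    rw [Set.smul_set_sdiff₀ hr.ne', smul_unitClosedBall_of_nonneg hr.le, hK r hr,
      Set.vadd_set_sdiff, vadd_closedBall, vadd_eq_add, add_zero]
  have hr' : ENNReal.ofReal (r ^ Module.finrank ℝ E) ≠ 0 := by simp [hr]
  rw [hset, measure_vadd, Measure.addHaar_smul_of_nonneg μ hr.le,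
    Measure.addHaar_closedBall' μ x hr.le, ENNReal.mul_div_mul_left _ _ hr' ENNReal.ofReal_ne_top]

section ObtuseCone

variable {E : Type*} [NormedAddCommGroup E] [InnerProductSpace ℝ E] {ζ z : E}

/-- The nonzero vectors making an angle of at least `2π/3` with `ζ`. -/
def obtuseCone (ζ : E) : Set E := {z | z ≠ 0 ∧ ⟪ζ, z⟫ ≤ -(‖ζ‖ * ‖z‖) / 2}

theorem smul_mem_obtuseCone {c : ℝ} (hc : 0 < c) (hz : z ∈ obtuseCone ζ) :
    c • z ∈ obtuseCone ζ := by
  refine ⟨smul_ne_zero hc.ne' hz.1, ?_⟩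
  rw [real_inner_smul_right, norm_smul, Real.norm_of_nonneg hc.le]
  nlinarith [hz.2]

theorem smul_obtuseCone {c : ℝ} (hc : 0 < c) : c • obtuseCone ζ = obtuseCone ζ := by
  ext z
  rw [Set.mem_smul_set_iff_inv_smul_mem₀ hc.ne']
  refine ⟨fun h => ?_, smul_mem_obtuseCone (inv_pos.2 hc)⟩
  simpa [smul_smul, hc.ne'] using smul_mem_obtuseCone hc h

theorem mem_obtuseCone_iff :
    z ∈ obtuseCone ζ ↔ ∃ t : ℝ, 0 < t ∧ ∃ v : E, ‖v‖ = 1 ∧ ⟪ζ, v⟫ ≤ -‖ζ‖ / 2 ∧ z = t • v := by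
  constructor
  · rintro hz
    have hpos : 0 < ‖z‖ := norm_pos_iff.2 hz.1
    refine ⟨‖z‖, hpos, ‖z‖⁻¹ • z, norm_smul_inv_norm hz.1, ?_, ?_⟩
    · rw [real_inner_smul_right, inv_mul_le_iff₀ hpos]
      linarith [hz.2]
    · rw [smul_smul, mul_inv_cancel₀ hpos.ne', one_smul]
  · rintro ⟨t, ht, v, hv, hζv, rfl⟩
    refine smul_mem_obtuseCone ht ⟨?_, ?_⟩
    · rintro rfl
      simp at hv
    · rwa [hv, mul_one]

theorem nonempty_interior_closedBall_inter_obtuseCone (hζ : ζ ≠ 0) :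
    (interior (closedBall 0 1 ∩ obtuseCone ζ)).Nonempty := by
  have hζpos : 0 < ‖ζ‖ := norm_pos_iff.2 hζ
  set U := {z : E | ⟪ζ, z⟫ < -(‖ζ‖ * ‖z‖) / 2} ∩ ball 0 1
  have hUopen : IsOpen U :=
    (isOpen_lt (by fun_prop) (by fun_prop)).inter isOpen_ball
  have hU : U ⊆ closedBall 0 1 ∩ obtuseCone ζ := by
    rintro z ⟨hz, hz1⟩
    refine ⟨ball_subset_closedBall hz1, ?_, hz.le⟩
    rintro rfl
    simp at hz
  set w : E := -(2 * ‖ζ‖)⁻¹ • ζ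
  have hw : ‖w‖ = 1 / 2 := by
    rw [norm_smul, norm_neg, norm_inv, Real.norm_of_nonneg (by positivity)]
    field_simp
  refine ⟨w, interior_maximal hU hUopen ⟨?_, ?_⟩⟩
  · show ⟪ζ, w⟫ < -(‖ζ‖ * ‖w‖) / 2
    rw [hw, real_inner_smul_right, real_inner_self_eq_norm_sq]
    field_simp
    nlinarith
  · rw [mem_ball_zero_iff, hw]
    norm_num

end ObtuseCone

theorem cone_positive_density_general (n : ℕ) (A : Set (EuclideanSpace ℝ (Fin n)))
    (x : EuclideanSpace ℝ (Fin n))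
    (hx : Tendsto (fun r : ℝ => volume (A ∩ closedBall x r) / volume (closedBall x r))
      (nhdsWithin 0 (Set.Ioi 0)) (nhds 1))
    (ζ : EuclideanSpace ℝ (Fin n)) (hζ : ζ ≠ 0)
    (C : Set (EuclideanSpace ℝ (Fin n)))
    (hC : C = {y | ∃ t : ℝ, 0 < t ∧ ∃ v : EuclideanSpace ℝ (Fin n),
      ‖v‖ = 1 ∧ ⟪ζ, v⟫ ≤ -‖ζ‖ / 2 ∧ y = x + t • v}) :
    (0 < liminf (fun r : ℝ => volume (A ∩ C ∩ closedBall x r) / volume (closedBall x r))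
        (nhdsWithin 0 (Set.Ioi 0))) ∧
      ∃ u : ℕ → EuclideanSpace ℝ (Fin n), (∀ k, u k ∈ A ∩ C) ∧
        Tendsto u atTop (nhds x) := by
  have hCx : C = x +ᵥ obtuseCone ζ := by
    ext y
    simp only [hC, Set.mem_vadd_set, mem_obtuseCone_iff, vadd_eq_add]
    constructor
    · rintro ⟨t, ht, v, hv, hζv, rfl⟩
      exact ⟨t • v, ⟨t, ht, v, hv, hζv, rfl⟩, rfl⟩
    · rintro ⟨_, ⟨t, ht, v, hv, hζv, rfl⟩, rfl⟩
      exact ⟨t, ht, v, hv, hζv, rfl⟩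
  subst hCx
  set d := volume (closedBall 0 1 \ obtuseCone ζ) /
    volume (closedBall (0 : EuclideanSpace ℝ (Fin n)) 1)
  have hd : d < 1 := by
    rw [ENNReal.div_lt_iff (Or.inl (measure_closedBall_pos _ _ one_pos).ne')
      (Or.inl measure_closedBall_lt_top.ne), one_mul]
    exact measure_diff_lt_self_of_nonempty_interior
      (nonempty_interior_closedBall_inter_obtuseCone hζ) measure_closedBall_lt_top.ne
  have hratio : ∀ᶠ r in 𝓝[>] (0 : ℝ),
      volume (closedBall x r \ (x +ᵥ obtuseCone ζ)) / volume (closedBall x r) ≤ d :=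
    eventually_mem_nhdsWithin.mono fun r hr =>
      (addHaar_closedBall_diff_vadd_cone_div volume (fun _ => smul_obtuseCone) x hr).le
  have hpos := (tsub_pos_of_lt hd).trans_le (le_liminf_measure_inter_div hx hratio)
  exact ⟨hpos, mem_closure_iff_seq_limit.1
    (mem_closure_of_liminf_measure_inter_closedBall_div_pos volume hpos)⟩

theorem cone_positive_density (n : ℕ) (A : Set (EuclideanSpace ℝ (Fin n)))
    (hA : MeasurableSet A) (x : EuclideanSpace ℝ (Fin n))
    (hx : Tendsto (fun r : ℝ => volume (A ∩ closedBall x r) / volume (closedBall x r))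
      (nhdsWithin 0 (Set.Ioi 0)) (nhds 1))
    (ζ : EuclideanSpace ℝ (Fin n)) (hζ : ζ ≠ 0)
    (C : Set (EuclideanSpace ℝ (Fin n)))
    (hC : C = {y | ∃ t : ℝ, 0 < t ∧ ∃ v : EuclideanSpace ℝ (Fin n),
      ‖v‖ = 1 ∧ ⟪ζ, v⟫ ≤ -‖ζ‖ / 2 ∧ y = x + t • v}) :
    (0 < liminf (fun r : ℝ => volume (A ∩ C ∩ closedBall x r) / volume (closedBall x r))
        (nhdsWithin 0 (Set.Ioi 0))) ∧
      ∃ u : ℕ → EuclideanSpace ℝ (Fin n), (∀ k, u k ∈ A ∩ C) ∧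
        Tendsto u atTop (nhds x) :=
  cone_positive_density_general n A x hx ζ hζ C hC
end

section
/- Let A ⊂ ℝⁿ be measurable, x a point of density 1 of A, and ξ ∈ ℝⁿ. If liminf_{y→x, y∈A} ⟨ξ, y − x⟩/|y − x| ≥ 0, then ξ = 0. -/
open MeasureTheory Filter Metric
open scoped RealInnerProductSpace ENNReal

private lemma cone_homothety (n : ℕ) (x ξ : EuclideanSpace ℝ (Fin n)) {r : ℝ} (hr : 0 < r) :
    (AffineMap.homothety x r) '' ({y | ⟪ξ, y - x⟫ < -(‖ξ‖/2) * ‖y - x‖} ∩ ball x 1)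
      = {y | ⟪ξ, y - x⟫ < -(‖ξ‖/2) * ‖y - x‖} ∩ ball x r := by
  ext z
  simp only [Set.mem_image, Set.mem_inter_iff, Set.mem_setOf_eq, mem_ball,
    AffineMap.homothety_apply, vsub_eq_sub, vadd_eq_add, dist_eq_norm]
  constructor
  · rintro ⟨y, ⟨hy1, hy2⟩, rfl⟩
    have hz : r • (y - x) + x - x = r • (y - x) := by abel
    rw [hz, real_inner_smul_right, norm_smul, Real.norm_eq_abs, abs_of_pos hr]
    constructor
    · nlinarith [hy1]
    · calc r * ‖y - x‖ < r * 1 := by exact mul_lt_mul_of_pos_left hy2 hr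
        _ = r := mul_one r
  · rintro ⟨hz1, hz2⟩
    refine ⟨r⁻¹ • (z - x) + x, ⟨?_, ?_⟩, ?_⟩
    · have hy : r⁻¹ • (z - x) + x - x = r⁻¹ • (z - x) := by abel
      rw [hy, real_inner_smul_right, norm_smul, Real.norm_eq_abs,
        abs_of_pos (inv_pos.2 hr)]
      nlinarith [hz1, inv_pos.2 hr]
    · have hy : r⁻¹ • (z - x) + x - x = r⁻¹ • (z - x) := by abel
      rw [hy, norm_smul, Real.norm_eq_abs, abs_of_pos (inv_pos.2 hr)]
      calc r⁻¹ * ‖z - x‖ < r⁻¹ * r := mul_lt_mul_of_pos_left hz2 (inv_pos.2 hr)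
        _ = 1 := inv_mul_cancel₀ hr.ne'
    · have : r • (r⁻¹ • (z - x) + x - x) = z - x := by
        rw [show r⁻¹ • (z - x) + x - x = r⁻¹ • (z - x) by abel, smul_smul,
          mul_inv_cancel₀ hr.ne', one_smul]
      rw [this]; abel

theorem eq_zero_of_liminf_inner_nonneg_at_density_point (n : ℕ)
    (A : Set (EuclideanSpace ℝ (Fin n))) (hA : MeasurableSet A)
    (x : EuclideanSpace ℝ (Fin n))
    (hx : Tendsto (fun r : ℝ => volume (A ∩ closedBall x r) / volume (closedBall x r))
      (nhdsWithin 0 (Set.Ioi 0)) (nhds 1))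
    (ξ : EuclideanSpace ℝ (Fin n))
    (h : ∀ ε : ℝ, 0 < ε → ∃ δ : ℝ, 0 < δ ∧ ∀ y ∈ A, y ≠ x → dist y x < δ →
      ⟪ξ, y - x⟫ / dist y x ≥ -ε) :
    ξ = 0 := by
  by_contra hξ
  have hξnorm : 0 < ‖ξ‖ := norm_pos_iff.2 hξ
  obtain ⟨δ, hδ, hδ'⟩ := h (‖ξ‖ / 4) (by positivity)
  set C : Set (EuclideanSpace ℝ (Fin n)) :=
    {y | ⟪ξ, y - x⟫ < -(‖ξ‖/2) * ‖y - x‖} with hCdef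
  have hCopen : IsOpen C := by
    apply isOpen_lt
    · exact (continuous_const.inner (continuous_id.sub continuous_const))
    · exact (continuous_const.mul ((continuous_id.sub continuous_const).norm))
  -- a point in C ∩ ball x 1
  have hy₀ : (x - (2 * ‖ξ‖)⁻¹ • ξ) ∈ C ∩ ball x 1 := by
    constructor
    · show ⟪ξ, x - (2 * ‖ξ‖)⁻¹ • ξ - x⟫ < -(‖ξ‖/2) * ‖x - (2 * ‖ξ‖)⁻¹ • ξ - x‖
      have he : x - (2 * ‖ξ‖)⁻¹ • ξ - x = -((2 * ‖ξ‖)⁻¹ • ξ) := by abel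
      rw [he, inner_neg_right, real_inner_smul_right, real_inner_self_eq_norm_sq,
        norm_neg, norm_smul, Real.norm_eq_abs, abs_of_pos (by positivity)]
      have h2 : (2 * ‖ξ‖)⁻¹ * ‖ξ‖ = 1 / 2 := by field_simp
      rw [h2]
      have h3 : (2 * ‖ξ‖)⁻¹ * ‖ξ‖ ^ 2 = ‖ξ‖ / 2 := by field_simp
      rw [h3]; nlinarith
    · rw [mem_ball, dist_eq_norm]
      have he : x - (2 * ‖ξ‖)⁻¹ • ξ - x = -((2 * ‖ξ‖)⁻¹ • ξ) := by abel
      rw [he, norm_neg, norm_smul, Real.norm_eq_abs, abs_of_pos (by positivity)]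
      have h2 : (2 * ‖ξ‖)⁻¹ * ‖ξ‖ = 1 / 2 := by field_simp
      rw [h2]; norm_num
  set S₁ : Set (EuclideanSpace ℝ (Fin n)) := C ∩ ball x 1 with hS₁def
  have hS₁pos : 0 < volume S₁ := (hCopen.inter isOpen_ball).measure_pos volume ⟨_, hy₀⟩
  have hB₁top : volume (closedBall x (1:ℝ)) ≠ ∞ := measure_closedBall_lt_top.ne
  have hB₁pos : volume (closedBall x (1:ℝ)) ≠ 0 :=
    (measure_closedBall_pos volume x one_pos).ne'
  set c' : ℝ≥0∞ := volume S₁ / volume (closedBall x (1:ℝ)) with hc'def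
  have hc'pos : 0 < c' := ENNReal.div_pos hS₁pos.ne' hB₁top
  have h1 : (1 : ℝ≥0∞) - c' < 1 := ENNReal.sub_lt_self ENNReal.one_ne_top one_ne_zero hc'pos.ne'
  have hev1 : ∀ᶠ r in nhdsWithin (0:ℝ) (Set.Ioi 0),
      1 - c' < volume (A ∩ closedBall x r) / volume (closedBall x r) :=
    hx.eventually (eventually_gt_nhds h1)
  have hev2 : ∀ᶠ r in nhdsWithin (0:ℝ) (Set.Ioi 0), r < δ :=
    (eventually_lt_nhds hδ).filter_mono nhdsWithin_le_nhds
  have hev3 : ∀ᶠ r in nhdsWithin (0:ℝ) (Set.Ioi 0), (0:ℝ) < r :=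
    eventually_mem_nhdsWithin
  obtain ⟨r, hratio, hrδ, hr0⟩ := (hev1.and (hev2.and hev3)).exists
  -- scaling
  have hfr : Module.finrank ℝ (EuclideanSpace ℝ (Fin n)) = n := finrank_euclideanSpace_fin
  set k : ℝ≥0∞ := ENNReal.ofReal (r ^ n) with hkdef
  have hk0 : k ≠ 0 := by
    simp only [hkdef, ne_eq, ENNReal.ofReal_eq_zero, not_le]
    positivity
  have hktop : k ≠ ∞ := ENNReal.ofReal_ne_top
  have hSr : volume (C ∩ ball x r) = k * volume S₁ := by
    rw [← cone_homothety n x ξ hr0, Measure.addHaar_image_homothety, hfr,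
      abs_of_pos (by positivity)]
  have hBr : volume (closedBall x r) = k * volume (closedBall x (1:ℝ)) := by
    rw [Measure.addHaar_closedBall volume x hr0.le, hfr,
      Measure.addHaar_closedBall volume x zero_le_one, one_pow, ENNReal.ofReal_one, one_mul]
  have hBrtop : volume (closedBall x r) ≠ ∞ := measure_closedBall_lt_top.ne
  have hBrpos : volume (closedBall x r) ≠ 0 := (measure_closedBall_pos volume x hr0).ne'
  -- from the ratio bound
  have hc'B : c' * volume (closedBall x r) = volume (C ∩ ball x r) := by
    rw [hBr, hSr, show c' * (k * volume (closedBall x (1:ℝ)))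
        = k * (c' * volume (closedBall x (1:ℝ))) by ring,
      hc'def, ENNReal.div_mul_cancel hB₁pos hB₁top]
  have hmain : volume (closedBall x r) - volume (C ∩ ball x r) < volume (A ∩ closedBall x r) := by
    have hlt := (ENNReal.lt_div_iff_mul_lt (Or.inl hBrpos) (Or.inl hBrtop)).1 hratio
    calc volume (closedBall x r) - volume (C ∩ ball x r)
        = (1 - c') * volume (closedBall x r) := by
          rw [ENNReal.sub_mul (fun _ _ => hBrtop), one_mul, hc'B]
      _ < volume (A ∩ closedBall x r) := hlt
  -- the intersection has positive measure
  have hpos : volume (A ∩ closedBall x r ∩ (C ∩ ball x r)) ≠ 0 := by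
    intro h0
    have hub : volume (A ∩ closedBall x r) + volume (C ∩ ball x r)
        ≤ volume (closedBall x r) := by
      rw [← measure_union_add_inter (A ∩ closedBall x r)
        ((hCopen.inter isOpen_ball).measurableSet), h0, add_zero]
      exact measure_mono (Set.union_subset Set.inter_subset_right
        (fun y hy => ball_subset_closedBall hy.2))
    have hfin : volume (C ∩ ball x r) ≠ ∞ :=
      ((measure_mono (fun y hy => ball_subset_closedBall hy.2)).trans_lt
        measure_closedBall_lt_top).ne
    exact absurd (ENNReal.le_sub_of_add_le_right hfin hub) (not_le.2 hmain)
  obtain ⟨y, hy⟩ := nonempty_of_measure_ne_zero hpos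
  obtain ⟨⟨hyA, hyB⟩, hyC, hyb⟩ := hy
  -- conclude
  have hyne : y ≠ x := by
    rintro rfl
    simp only [hCdef, Set.mem_setOf_eq, sub_self, inner_zero_right, norm_zero,
      mul_zero] at hyC
    exact lt_irrefl 0 hyC
  have hdist : 0 < dist y x := dist_pos.2 hyne
  have hge := hδ' y hyA hyne (lt_of_le_of_lt (mem_closedBall.1 hyB) hrδ)
  have hyC' : ⟪ξ, y - x⟫ < -(‖ξ‖/2) * ‖y - x‖ := hyC
  rw [dist_eq_norm] at hdist hge
  have : ⟪ξ, y - x⟫ / ‖y - x‖ < -(‖ξ‖/2) := by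
    rw [div_lt_iff₀ hdist]
    nlinarith
  nlinarith
end

section
/- Let ĝ : ℝⁿ → ℝ be convex and E ⊂ ℝⁿ measurable such that ĝ is differentiable at a.e. x ∈ E. Then for almost every x ∈ E, limsup_{y→x} |ĝ(y) − ĝ(x) − ⟨∇ĝ(x), y−x⟩| / |y−x|² < +∞. -/
/-!
Along a line `t ↦ x + t • e` the right derivative of a convex function `f` in direction `e` is
monotone, hence differentiable at almost every `t` (Lebesgue). At such a point convexity gives
`f (x + s • e) - f x - s D⁺f(x) ≤ s (D⁺f(x + s • e) - D⁺f(x)) = O(s²)`, and disintegrating the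
Haar measure along the coordinate axes shows that almost every `x` has such a quadratic bound along
every axis. At a point of differentiability the Taylor remainder `r v = f (x + v) - f x - Df(x) v`
is convex and nonnegative, and writing `v` as the average of the points `N vᵢ bᵢ` turns the axis
bounds into `r v ≤ C ‖v‖²`.
-/

open MeasureTheory Filter Set Asymptotics
open scoped Topology RealInnerProductSpace

section

variable {E : Type*} [NormedAddCommGroup E] [NormedSpace ℝ E] {f : E → ℝ}

noncomputable def rightLineDeriv (f : E → ℝ) (x e : E) : ℝ :=
  derivWithin (fun t : ℝ => f (x + t • e)) (Ioi 0) 0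

lemma DifferentiableAt.rightLineDeriv_eq {x : E} (hx : DifferentiableAt ℝ f x) (e : E) :
    rightLineDeriv f x e = fderiv ℝ f x e :=
  (HasDerivAt.hasDerivWithinAt (hx.hasFDerivAt.hasLineDerivAt e)).derivWithin
    (uniqueDiffWithinAt_Ioi 0)

namespace ConvexOn

lemma comp_line (hf : ConvexOn ℝ univ f) (x e : E) :
    ConvexOn ℝ univ fun t : ℝ => f (x + t • e) := by
  simpa [Function.comp_def, AffineMap.lineMap_apply, add_comm] using
    hf.comp_affineMap (AffineMap.lineMap x (x + e))

lemma mul_rightLineDeriv_le (hf : ConvexOn ℝ univ f) (x e : E) (t : ℝ) :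
    t * rightLineDeriv f x e ≤ f (x + t • e) - f x := by
  have hφ := hf.comp_line x e
  rcases lt_trichotomy t 0 with ht | rfl | ht
  · have h := (hφ.slope_le_leftDeriv_of_mem_interior (mem_univ t) (by simp) ht).trans
      (hφ.leftDeriv_le_rightDeriv_of_mem_interior (x := 0) (by simp))
    rw [slope_def_field, div_le_iff₀ (by linarith)] at h
    simp only [zero_smul, add_zero] at h
    unfold rightLineDeriv
    linarith
  · simp
  · have h := hφ.rightDeriv_le_slope_of_mem_interior (x := 0) (by simp) (mem_univ t) ht
    rw [slope_def_field, le_div_iff₀ (by linarith)] at h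
    simp only [zero_smul, add_zero] at h
    unfold rightLineDeriv
    linarith

lemma sub_le_mul_rightLineDeriv (hf : ConvexOn ℝ univ f) (x e : E) (t : ℝ) :
    f (x + t • e) - f x ≤ t * rightLineDeriv f (x + t • e) e := by
  have h := hf.mul_rightLineDeriv_le (x + t • e) e (-t)
  rw [add_assoc, ← add_smul, add_neg_cancel, zero_smul, add_zero] at h
  linarith

lemma monotone_rightLineDeriv_along (hf : ConvexOn ℝ univ f) (x e : E) :
    Monotone fun t : ℝ => rightLineDeriv f (x + t • e) e := by
  intro u v huv
  have h₁ := hf.mul_rightLineDeriv_le (x + u • e) e (v - u)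
  have h₂ := hf.mul_rightLineDeriv_le (x + v • e) e (u - v)
  simp only [add_assoc, ← add_smul, add_sub_cancel] at h₁ h₂
  rcases huv.eq_or_lt with rfl | huv
  · rfl
  · dsimp only
    nlinarith

lemma measurable_rightLineDeriv [MeasurableSpace E] [BorelSpace E] (hf : ConvexOn ℝ univ f)
    (hc : Continuous f) (e : E) : Measurable fun x => rightLineDeriv f x e := by
  refine measurable_of_tendsto_metrizable' (𝓝[>] (0 : ℝ))
    (f := fun s x => slope (fun t : ℝ => f (x + t • e)) 0 s) (fun s => ?_)
    (tendsto_pi_nhds.2 fun x => ?_)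
  · refine Continuous.measurable ?_
    simp only [slope_def_field]
    fun_prop
  · exact (hasDerivWithinAt_iff_tendsto_slope' (lt_irrefl 0)).1
      ((hf.comp_line x e).hasDerivWithinAt_rightDeriv_of_mem_interior (by simp))

end ConvexOn

/-- The quadratic upper bound along `e` is tested at rational steps only, so that the set is
measurable. -/
def quadUpperAlong (f : E → ℝ) (e : E) : Set E :=
  ⋃ C : ℕ, ⋃ k : ℕ, ⋂ q : ℚ, ⋂ (_ : |(q : ℝ)| < 1 / (k + 1)),
    {x | f (x + (q : ℝ) • e) - f x - q * rightLineDeriv f x e ≤ C * (q : ℝ) ^ 2}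

lemma measurableSet_quadUpperAlong [MeasurableSpace E] [BorelSpace E] {e : E}
    (hc : Continuous f) (hD : Measurable fun x => rightLineDeriv f x e) :
    MeasurableSet (quadUpperAlong f e) := by
  refine .iUnion fun C => .iUnion fun k => .iInter fun q => .iInter fun _ =>
    measurableSet_le ?_ measurable_const
  exact ((hc.comp (continuous_add_const _)).measurable.sub hc.measurable).sub (hD.const_mul _)

lemma mem_quadUpperAlong_iff (hc : Continuous f) {x e : E} :
    x ∈ quadUpperAlong f e ↔ ∃ C : ℝ, ∀ᶠ t in 𝓝 (0 : ℝ),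
      f (x + t • e) - f x - t * rightLineDeriv f x e ≤ C * t ^ 2 := by
  simp only [quadUpperAlong, mem_iUnion, mem_iInter, mem_ofPred_eq]
  constructor
  · rintro ⟨C, k, hq⟩
    have hk : (0 : ℝ) < 1 / (k + 1) := by positivity
    refine ⟨C, mem_of_superset (Ioo_mem_nhds (neg_lt_zero.2 hk) hk) ?_⟩
    refine (Rat.denseRange_cast.open_subset_closure_inter isOpen_Ioo).trans
      (closure_minimal ?_ (isClosed_le (by fun_prop) (by fun_prop)))
    rintro _ ⟨ht, q, rfl⟩
    exact hq q (abs_lt.2 ⟨by linarith [ht.1], ht.2⟩)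
  · rintro ⟨C, hC⟩
    obtain ⟨ε, hε, hball⟩ := Metric.eventually_nhds_iff.1 hC
    obtain ⟨k, hk⟩ := exists_nat_one_div_lt hε
    refine ⟨⌈C⌉₊, k, fun q hq => (hball ?_).trans ?_⟩
    · rw [Real.dist_0_eq_abs]
      exact hq.trans hk
    · gcongr
      exact Nat.le_ceil C

namespace ConvexOn

lemma ae_mem_quadUpperAlong_line (hf : ConvexOn ℝ univ f) (hc : Continuous f) (x e : E) :
    ∀ᵐ t : ℝ, x + t • e ∈ quadUpperAlong f e := by
  set m : ℝ → ℝ := fun t => rightLineDeriv f (x + t • e) e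
  filter_upwards [(hf.monotone_rightLineDeriv_along x e).ae_differentiableAt] with t ht
  obtain ⟨K, hK⟩ := ht.hasDerivAt.isBigO_sub.bound
  have hK₀ : ∀ᶠ s in 𝓝 (0 : ℝ), |m (t + s) - m t| ≤ K * |s| := by
    have : Tendsto (fun s : ℝ => t + s) (𝓝 0) (𝓝 t) := by
      simpa using (continuous_const_add t).tendsto 0
    filter_upwards [this.eventually hK] with s hs
    simpa using hs
  refine (mem_quadUpperAlong_iff hc).2 ⟨K, ?_⟩
  filter_upwards [hK₀] with s hs
  have hsub := hf.sub_le_mul_rightLineDeriv (x + t • e) e s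
  rw [add_assoc, ← add_smul] at hsub
  calc f (x + t • e + s • e) - f (x + t • e) - s * m t ≤ s * (m (t + s) - m t) := by
        rw [add_assoc, ← add_smul]
        linarith
    _ ≤ |s| * |m (t + s) - m t| := by
        rw [← abs_mul]
        exact le_abs_self _
    _ ≤ |s| * (K * |s|) := by gcongr
    _ = K * s ^ 2 := by
        rw [← sq_abs s]
        ring

lemma ae_exists_eventually_sub_le_sq [MeasurableSpace E] [BorelSpace E] [FiniteDimensional ℝ E]
    (μ : Measure E) [μ.IsAddHaarMeasure] (hf : ConvexOn ℝ univ f) (e : E) :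
    ∀ᵐ x ∂μ, ∃ C : ℝ, ∀ᶠ t in 𝓝 (0 : ℝ),
      f (x + t • e) - f x - t * rightLineDeriv f x e ≤ C * t ^ 2 := by
  have hc : Continuous f := continuousOn_univ.1 (hf.continuousOn isOpen_univ)
  have hmem : ∀ᵐ x ∂μ, x ∈ quadUpperAlong f e :=
    ae_mem_of_ae_add_linearMap_mem (LinearMap.toSpanSingleton ℝ E e) volume μ
      (measurableSet_quadUpperAlong hc (hf.measurable_rightLineDeriv hc e))
      fun x => by simpa using hf.ae_mem_quadUpperAlong_line hc x e
  filter_upwards [hmem] with x hx using (mem_quadUpperAlong_iff hc).1 hx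

lemma exists_eventually_le_sq_norm {ι : Type*} [Fintype ι] [Nonempty ι]
    (b : Module.Basis ι ℝ E) {h : E → ℝ} (hh : ConvexOn ℝ univ h)
    (hb : ∀ i, ∃ C, ∀ᶠ t in 𝓝 (0 : ℝ), h (t • b i) ≤ C * t ^ 2) :
    ∃ C, ∀ᶠ v in 𝓝 0, h v ≤ C * ‖v‖ ^ 2 := by
  have := Module.Finite.of_basis b
  choose C hC using hb
  set N : ℝ := (Fintype.card ι : ℝ)
  have hN : 0 < N := by simp [N, Fintype.card_pos]
  have hpiece : ∀ᶠ v in 𝓝 (0 : E), ∀ i,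
      h ((N * b.repr v i) • b i) ≤ C i * (N * b.repr v i) ^ 2 := by
    refine eventually_all.2 fun i => ?_
    have : Tendsto (fun v => N * b.repr v i) (𝓝 0) (𝓝 0) := by
      simpa using (((b.coord i).continuous_of_finiteDimensional).const_mul N).tendsto 0
    exact this.eventually (hC i)
  have hbig : (fun v => ∑ i, N * C i * b.repr v i ^ 2) =O[𝓝 0] fun v => ‖v‖ ^ 2 :=
    IsBigO.fun_sum fun i _ =>
      ((((b.coord i).toContinuousLinearMap.isBigO_id _).norm_right).pow 2).const_mul_left _
  obtain ⟨K, hK⟩ := hbig.bound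
  refine ⟨K, ?_⟩
  filter_upwards [hpiece, hK] with v hv hKv
  calc h v = h (∑ i, N⁻¹ • ((N * b.repr v i) • b i)) := by
        simp_rw [smul_smul, ← mul_assoc, inv_mul_cancel₀ hN.ne', one_mul, b.sum_repr]
    _ ≤ ∑ i, N⁻¹ • h ((N * b.repr v i) • b i) :=
        hh.map_sum_le (fun _ _ => by positivity) (by simp [N]) fun _ _ => mem_univ _
    _ ≤ ∑ i, N * C i * b.repr v i ^ 2 := by
        refine Finset.sum_le_sum fun i _ => ?_
        rw [smul_eq_mul]
        calc N⁻¹ * h ((N * b.repr v i) • b i) ≤ N⁻¹ * (C i * (N * b.repr v i) ^ 2) := by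
              gcongr
              exact hv i
          _ = N * C i * b.repr v i ^ 2 := by field_simp
    _ ≤ K * ‖v‖ ^ 2 := by simpa using (le_abs_self _).trans hKv

lemma sub_fderiv (hf : ConvexOn ℝ univ f) (x : E) :
    ConvexOn ℝ univ fun v => f (x + v) - f x - fderiv ℝ f x v := by
  have h := ((hf.translate_right x).sub
    ((fderiv ℝ f x).toLinearMap.concaveOn convex_univ)).add_const (-f x)
  rw [preimage_univ] at h
  refine h.congr fun v _ => ?_
  simp only [Pi.add_apply, Pi.sub_apply, Function.comp_apply, ContinuousLinearMap.coe_coe]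
  ring

lemma isBigO_sub_fderiv {ι : Type*} [Fintype ι] (hf : ConvexOn ℝ univ f) {x : E}
    (hx : DifferentiableAt ℝ f x) (b : Module.Basis ι ℝ E)
    (hxb : ∀ i, ∃ C, ∀ᶠ t in 𝓝 (0 : ℝ), f (x + t • b i) - f x - t * fderiv ℝ f x (b i) ≤ C * t ^ 2) :
    (fun v => f (x + v) - f x - fderiv ℝ f x v) =O[𝓝 0] fun v => ‖v‖ ^ 2 := by
  rcases subsingleton_or_nontrivial E with hE | hE
  · have : (fun v => f (x + v) - f x - fderiv ℝ f x v) = 0 := by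
      ext v
      simp [Subsingleton.elim v 0]
    rw [this]
    exact isBigO_zero _ _
  have := b.index_nonempty
  obtain ⟨C, hC⟩ := (hf.sub_fderiv x).exists_eventually_le_sq_norm b
    fun i => by simpa only [map_smul, smul_eq_mul] using hxb i
  refine IsBigO.of_bound C ?_
  filter_upwards [hC] with v hv
  have hnonneg : 0 ≤ f (x + v) - f x - fderiv ℝ f x v := by
    have := hf.mul_rightLineDeriv_le x v 1
    rw [hx.rightLineDeriv_eq, one_mul, one_smul] at this
    linarith
  simpa [abs_of_nonneg hnonneg] using hv

end ConvexOn

end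

theorem alexandroff_limsup_bound_general (n : ℕ) (ghat : EuclideanSpace ℝ (Fin n) → ℝ)
    (hghat : ConvexOn ℝ Set.univ ghat)
    (E : Set (EuclideanSpace ℝ (Fin n)))
    (hdiff : ∀ᵐ x ∂(volume.restrict E), DifferentiableAt ℝ ghat x) :
    ∀ᵐ x ∂(volume.restrict E), ∃ C : ℝ, ∃ δ : ℝ, 0 < δ ∧
      ∀ y : EuclideanSpace ℝ (Fin n), dist y x < δ →
        |ghat y - ghat x - ⟪gradient ghat x, y - x⟫| ≤ C * dist y x ^ 2 := by
  let b := (EuclideanSpace.basisFun (Fin n) ℝ).toBasis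
  have hlines : ∀ᵐ x ∂(volume.restrict E), ∀ i, ∃ C : ℝ, ∀ᶠ t in 𝓝 (0 : ℝ),
      ghat (x + t • b i) - ghat x - t * rightLineDeriv ghat x (b i) ≤ C * t ^ 2 :=
    ae_restrict_of_ae (ae_all_iff.2 fun i => hghat.ae_exists_eventually_sub_le_sq volume (b i))
  filter_upwards [hdiff, hlines] with x hx hxb
  simp only [hx.rightLineDeriv_eq] at hxb
  obtain ⟨C, hC⟩ := (hghat.isBigO_sub_fderiv hx b hxb).bound
  obtain ⟨δ, hδ, hball⟩ := Metric.eventually_nhds_iff.1 hC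
  refine ⟨C, δ, hδ, fun y hy => ?_⟩
  simpa [inner_gradient_left, dist_eq_norm] using @hball (y - x) (by simpa [dist_eq_norm] using hy)

theorem alexandroff_limsup_bound (n : ℕ) (ghat : EuclideanSpace ℝ (Fin n) → ℝ)
    (hghat : ConvexOn ℝ Set.univ ghat)
    (E : Set (EuclideanSpace ℝ (Fin n))) (hE : MeasurableSet E)
    (hdiff : ∀ᵐ x ∂(volume.restrict E), DifferentiableAt ℝ ghat x) :
    ∀ᵐ x ∂(volume.restrict E), ∃ C : ℝ, ∃ δ : ℝ, 0 < δ ∧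
      ∀ y : EuclideanSpace ℝ (Fin n), dist y x < δ →
        |ghat y - ghat x - ⟪gradient ghat x, y - x⟫| ≤ C * dist y x ^ 2 :=
  alexandroff_limsup_bound_general n ghat hghat E hdiff
end

section
/- Define f = 0 on a fat Cantor set C ⊂ [0,1] of measure 1/2 and on each complementary interval (aₙᵏ, bₙᵏ) of generation n let f be a smooth nonnegative bump of height 2⁻ⁿ with all one-sided derivatives vanishing at the endpoints. Then: (i) for every x ∈ ℝ there exists ξ_x ∈ ℝ with liminf_{y→x} (f(y) − f(x) − ξ_x(y−x))/|y−x|² > −∞; (ii) for every x in C apart from the endpoints of the removed intervals and {0,1}, and for every ξ ∈ ℝ, limsup_{y→x} (f(y) − f(x) − ξ(y−x))/|y−x|² = +∞. -/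
/-!
On each of the `2ⁿ` gaps of length `4⁻⁽ⁿ⁺¹⁾` removed at depth `n` of a fat Cantor construction,
`f` is a concave parabolic cap of height `3⁻⁽ⁿ⁺¹⁾`; elsewhere `f = 0`. At a point of a gap, the
full parabola of that gap is a lower bound for `f` (it is negative outside the gap and `f ≥ 0`),
so `f` lies above a parabola touching it; off the gaps `f` attains its minimum `0`.

A point `x` of the Cantor set that is not an endpoint lies, at arbitrarily large depths `n`, in
an interval of length `ℓₙ ≤ 2⁻ⁿ` whose gap lies to the left of `x`, and also at arbitrarily large
depths in one whose gap lies to the right. Taking the gap centre `y` on the side where the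
linear term `ξ (y - x)` is nonpositive gives a second difference quotient
`≥ 3⁻⁽ⁿ⁺¹⁾ / ℓₙ² ≥ (4/3)ⁿ / 3 → ∞`. The gaps have total length `∑ 2ⁿ 4⁻⁽ⁿ⁺¹⁾ = 1/2`.
-/

open MeasureTheory Set Filter Topology Function
open scoped ENNReal

noncomputable section

def parabolicBump (c r h y : ℝ) : ℝ := h * max 0 (1 - ((y - c) / r) ^ 2)

section ParabolicBump

variable {c r h : ℝ}

lemma continuous_parabolicBump (c r h : ℝ) : Continuous (parabolicBump c r h) := by
  unfold parabolicBump; fun_prop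

lemma parabolicBump_nonneg (hh : 0 ≤ h) (y : ℝ) : 0 ≤ parabolicBump c r h y :=
  mul_nonneg hh (le_max_left _ _)

lemma parabolicBump_le (hh : 0 ≤ h) (y : ℝ) : parabolicBump c r h y ≤ h :=
  mul_le_of_le_one_right hh (max_le zero_le_one (by nlinarith [sq_nonneg ((y - c) / r)]))

@[simp] lemma parabolicBump_self : parabolicBump c r h c = h := by
  simp [parabolicBump]

lemma parabolicBump_eq_zero (hr : 0 < r) {y : ℝ} (hy : y ∉ Metric.ball c r) :
    parabolicBump c r h y = 0 := by
  rw [Metric.mem_ball, not_lt, Real.dist_eq] at hy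
  have : 1 ≤ ((y - c) / r) ^ 2 := by
    rw [div_pow, one_le_div (by positivity), ← sq_abs (y - c)]
    exact pow_le_pow_left₀ hr.le hy 2
  simp [parabolicBump, this]

lemma neg_mul_sq_le_parabolicBump_sub (hh : 0 ≤ h) {x : ℝ} (hx : x ∈ Metric.ball c r) (y : ℝ) :
    -(h / r ^ 2) * (y - x) ^ 2 ≤
      parabolicBump c r h y - parabolicBump c r h x - -(2 * h * (x - c) / r ^ 2) * (y - x) := by
  rw [Metric.mem_ball, Real.dist_eq] at hx
  have hr : 0 < r := (abs_nonneg _).trans_lt hx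
  have hx1 : ((x - c) / r) ^ 2 < 1 := by
    rw [div_pow, div_lt_one (by positivity), ← sq_abs (x - c)]
    exact pow_lt_pow_left₀ hx (abs_nonneg _) two_ne_zero
  have hy : h * (1 - ((y - c) / r) ^ 2) ≤ parabolicBump c r h y :=
    mul_le_mul_of_nonneg_left (le_max_right _ _) hh
  have hxeq : parabolicBump c r h x = h * (1 - ((x - c) / r) ^ 2) := by
    rw [parabolicBump, max_eq_right (by linarith)]
  rw [hxeq]
  have hquad : h * (1 - ((y - c) / r) ^ 2) - h * (1 - ((x - c) / r) ^ 2)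
      - -(2 * h * (x - c) / r ^ 2) * (y - x) = -(h / r ^ 2) * (y - x) ^ 2 := by
    field_simp; ring
  linarith

end ParabolicBump

lemma tsum_comp_length {α : Type*} [Fintype α] (g : ℕ → ℝ≥0∞) :
    ∑' s : List α, g s.length = ∑' n, Fintype.card α ^ n * g n := by
  rw [← (Equiv.sigmaFiberEquiv List.length).tsum_eq, ENNReal.tsum_sigma']
  congr 1 with n
  have hg (v : {s : List α // s.length = n}) :
      g (Equiv.sigmaFiberEquiv List.length ⟨n, v⟩).length = g n :=
    congrArg g v.2
  simp only [hg, ENNReal.tsum_const]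
  change ((ENat.card (List.Vector α n) : ℝ≥0∞)) * _ = _
  simp [ENat.card_eq_coe_fintype_card, card_vector]

lemma tsum_ofReal_comp_length {g : ℕ → ℝ} (hg : ∀ n, 0 ≤ g n)
    (hsum : Summable fun n => 2 ^ n * g n) :
    ∑' s : List Bool, ENNReal.ofReal (g s.length) = ENNReal.ofReal (∑' n, 2 ^ n * g n) := by
  rw [tsum_comp_length (fun n => ENNReal.ofReal (g n)), Fintype.card_bool,
    ENNReal.ofReal_tsum_of_nonneg (fun n => mul_nonneg (by positivity) (hg n)) hsum]
  congr 1 with n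
  rw [ENNReal.ofReal_mul (by positivity), ENNReal.ofReal_pow zero_le_two]
  norm_num

end

namespace FatCantor

noncomputable section

def intervalLen (n : ℕ) : ℝ := (1 / 2) ^ (n + 1) + (1 / 2) ^ (2 * n + 1)

def gapLen (n : ℕ) : ℝ := (1 / 4) ^ (n + 1)

def height (n : ℕ) : ℝ := (1 / 3) ^ (n + 1)

lemma intervalLen_pos (n : ℕ) : 0 < intervalLen n := by unfold intervalLen; positivity

lemma gapLen_pos (n : ℕ) : 0 < gapLen n := by unfold gapLen; positivity

lemma height_pos (n : ℕ) : 0 < height n := by unfold height; positivity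

lemma intervalLen_zero : intervalLen 0 = 1 := by norm_num [intervalLen]

lemma intervalLen_eq_two_mul_intervalLen_succ_add_gapLen (n : ℕ) :
    intervalLen n = 2 * intervalLen (n + 1) + gapLen n := by
  rw [intervalLen, intervalLen, gapLen, show (1 / 4 : ℝ) = (1 / 2) ^ 2 by norm_num, ← pow_mul]
  ring

lemma intervalLen_le_half_pow (n : ℕ) : intervalLen n ≤ (1 / 2) ^ n := by
  have : (1 / 2 : ℝ) ^ (2 * n + 1) ≤ (1 / 2) ^ (n + 1) :=
    pow_le_pow_of_le_one (by norm_num) (by norm_num) (by omega)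
  calc intervalLen n ≤ 2 * (1 / 2) ^ (n + 1) := by rw [intervalLen]; linarith
    _ = (1 / 2) ^ n := by rw [pow_succ]; ring

lemma tendsto_intervalLen : Tendsto intervalLen atTop (𝓝 0) :=
  squeeze_zero (fun n => (intervalLen_pos n).le) intervalLen_le_half_pow
    (tendsto_pow_atTop_nhds_zero_of_lt_one (by norm_num) (by norm_num))

lemma tendsto_height_div_intervalLen_sq :
    Tendsto (fun n => height n / intervalLen n ^ 2) atTop atTop := by
  refine tendsto_atTop_mono (fun n => ?_)
    ((tendsto_pow_atTop_atTop_of_one_lt (by norm_num : (1 : ℝ) < 4 / 3)).atTop_div_const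
      (by norm_num : (0 : ℝ) < 3))
  have hlen_sq : intervalLen n ^ 2 ≤ (1 / 4) ^ n := by
    rw [show (1 / 4 : ℝ) = (1 / 2) ^ 2 by norm_num, ← pow_mul, mul_comm, pow_mul]
    exact pow_le_pow_left₀ (intervalLen_pos n).le (intervalLen_le_half_pow n) 2
  calc (4 / 3 : ℝ) ^ n / 3 = height n / (1 / 4) ^ n := by
        rw [height, pow_succ, one_div_pow, one_div_pow, div_pow]; field_simp
    _ ≤ height n / intervalLen n ^ 2 := by
        gcongr
        · exact (height_pos n).le
        · exact pow_pos (intervalLen_pos n) 2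

-- A node of depth `n` is a list of `n` choices (`false` = left child), the most recent first.
def left : List Bool → ℝ
  | [] => 0
  | false :: s => left s
  | true :: s => left s + intervalLen s.length - intervalLen (s.length + 1)

def right (s : List Bool) : ℝ := left s + intervalLen s.length

def interval (s : List Bool) : Set ℝ := Icc (left s) (right s)

def gapCenter (s : List Bool) : ℝ := left s + intervalLen s.length / 2

def gap (s : List Bool) : Set ℝ := Metric.ball (gapCenter s) (gapLen s.length / 2)

lemma isOpen_gap (s : List Bool) : IsOpen (gap s) := Metric.isOpen_ball

@[simp] lemma left_nil : left [] = 0 := rfl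

@[simp] lemma left_false (s : List Bool) : left (false :: s) = left s := rfl

@[simp] lemma left_true (s : List Bool) :
    left (true :: s) = left s + intervalLen s.length - intervalLen (s.length + 1) := rfl

@[simp] lemma right_false (s : List Bool) :
    right (false :: s) = left s + intervalLen (s.length + 1) := rfl

@[simp] lemma right_true (s : List Bool) : right (true :: s) = right s := by
  simp [right]

lemma gap_eq_Ioo (s : List Bool) :
    gap s = Ioo (left s + intervalLen (s.length + 1))
      (left s + intervalLen s.length - intervalLen (s.length + 1)) := by
  rw [gap, Real.ball_eq_Ioo, gapCenter, intervalLen_eq_two_mul_intervalLen_succ_add_gapLen s.length]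
  congr 1 <;> ring

lemma interval_cons_subset (b : Bool) (s : List Bool) : interval (b :: s) ⊆ interval s := by
  have := intervalLen_eq_two_mul_intervalLen_succ_add_gapLen s.length
  have := intervalLen_pos (s.length + 1)
  have := gapLen_pos s.length
  cases b <;> refine Icc_subset_Icc ?_ ?_ <;> simp [right] <;> linarith

lemma interval_subset_Icc (s : List Bool) : interval s ⊆ Icc 0 1 := by
  induction s with
  | nil => simp [interval, right, intervalLen_zero]
  | cons b s ih => exact (interval_cons_subset b s).trans ih

lemma gap_subset_interval (s : List Bool) : gap s ⊆ interval s := by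
  rw [gap_eq_Ioo]
  have := intervalLen_pos (s.length + 1)
  exact Ioo_subset_Icc_self.trans (Icc_subset_Icc (by linarith) (by simp [right]; linarith))

lemma disjoint_gap_interval_cons (b : Bool) (s : List Bool) :
    Disjoint (gap s) (interval (b :: s)) := by
  rw [gap_eq_Ioo, Set.disjoint_left]
  rintro x ⟨hl, hr⟩ ⟨hl', hr'⟩
  cases b <;> simp at hl' hr' <;> linarith

lemma mem_interval_cons_of_notMem_gap {x : ℝ} {s : List Bool} (hx : x ∈ interval s)
    (hgap : x ∉ gap s) : x ∈ interval (decide (gapCenter s < x) :: s) := by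
  rw [gap_eq_Ioo, mem_Ioo, not_and_or, not_lt, not_lt] at hgap
  have := intervalLen_eq_two_mul_intervalLen_succ_add_gapLen s.length
  have := gapLen_pos s.length
  obtain ⟨hl, hr⟩ := hx
  simp only [right] at hr
  by_cases hc : gapCenter s < x
  · simp only [hc, decide_true, interval, left_true, right, List.length_cons, mem_Icc]
    simp only [gapCenter] at hc
    constructor <;> rcases hgap with h | h <;> linarith
  · simp only [hc, decide_false, interval, left_false, right_false, mem_Icc]
    simp only [gapCenter] at hc
    constructor <;> rcases hgap with h | h <;> linarith

def path (x : ℝ) : ℕ → List Bool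
  | 0 => []
  | n + 1 => decide (gapCenter (path x n) < x) :: path x n

@[simp] lemma length_path (x : ℝ) (n : ℕ) : (path x n).length = n := by
  induction n with
  | zero => rfl
  | succ n ih => simp [path, ih]

lemma eq_path_of_mem_interval {x : ℝ} {s : List Bool} (hx : x ∈ interval s) :
    s = path x s.length := by
  induction s with
  | nil => rfl
  | cons b s ih =>
    have hs := ih (interval_cons_subset b s hx)
    have := intervalLen_eq_two_mul_intervalLen_succ_add_gapLen s.length
    have := gapLen_pos s.length
    obtain ⟨hl, hr⟩ := hx
    rw [List.length_cons, path, ← hs]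
    congr 1
    cases b
    · exact (decide_eq_false (by simp [gapCenter] at hr ⊢; linarith)).symm
    · exact (decide_eq_true (by simp [gapCenter] at hl ⊢; linarith)).symm

lemma antitone_interval_path (x : ℝ) : Antitone fun n => interval (path x n) :=
  antitone_nat_of_succ_le fun _ => interval_cons_subset _ _

lemma disjoint_gap_interval_of_length_lt {s t : List Bool} (h : s.length < t.length) :
    Disjoint (gap s) (interval t) := by
  rw [Set.disjoint_left]
  intro x hxs hxt
  rw [eq_path_of_mem_interval (gap_subset_interval s hxs)] at hxs
  rw [eq_path_of_mem_interval hxt] at hxt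
  exact Set.disjoint_left.mp (disjoint_gap_interval_cons _ _) hxs
    (antitone_interval_path x (Nat.succ_le_of_lt h) hxt)

lemma pairwise_disjoint_gap : Pairwise (Disjoint on gap) := by
  intro s t hst
  rcases lt_trichotomy s.length t.length with h | h | h
  · exact (disjoint_gap_interval_of_length_lt h).mono_right (gap_subset_interval t)
  · refine Set.disjoint_left.mpr fun x hxs hxt => hst ?_
    rw [eq_path_of_mem_interval (gap_subset_interval s hxs),
      eq_path_of_mem_interval (gap_subset_interval t hxt), h]
  · exact ((disjoint_gap_interval_of_length_lt h).mono_right (gap_subset_interval s)).symm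

def cantorSet : Set ℝ := Icc 0 1 \ ⋃ s, gap s

def endpoints : Set ℝ := range left ∪ range right

lemma mem_interval_path {x : ℝ} (hx : x ∈ cantorSet) (n : ℕ) : x ∈ interval (path x n) := by
  induction n with
  | zero => simpa [path, interval, right, intervalLen_zero] using hx.1
  | succ n ih => exact mem_interval_cons_of_notMem_gap ih fun h => hx.2 (mem_iUnion_of_mem _ h)

lemma hasSum_two_pow_mul_gapLen : HasSum (fun n => 2 ^ n * gapLen n) (1 / 2) := by
  have := hasSum_geometric_two.mul_left (1 / 4 : ℝ)
  rw [show (1 / 4 : ℝ) * 2 = 1 / 2 by norm_num] at this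
  refine this.congr_fun fun n => ?_
  have h : (2 : ℝ) ^ n * (1 / 2) ^ n = 1 := by rw [← mul_pow]; norm_num
  rw [gapLen, show (1 / 4 : ℝ) = (1 / 2) ^ 2 by norm_num, ← pow_mul]
  linear_combination (1 / 4 * (1 / 2 : ℝ) ^ n) * h

lemma volume_iUnion_gap : volume (⋃ s, gap s) = ENNReal.ofReal (1 / 2) := by
  rw [measure_iUnion pairwise_disjoint_gap fun s => (isOpen_gap s).measurableSet]
  simp only [gap, Real.volume_ball, mul_div_cancel₀ _ (two_ne_zero (α := ℝ))]
  rw [tsum_ofReal_comp_length (fun n => (gapLen_pos n).le) hasSum_two_pow_mul_gapLen.summable,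
    hasSum_two_pow_mul_gapLen.tsum_eq]

lemma measurableSet_iUnion_gap : MeasurableSet (⋃ s, gap s) :=
  MeasurableSet.iUnion fun s => (isOpen_gap s).measurableSet

lemma measurableSet_cantorSet : MeasurableSet cantorSet :=
  measurableSet_Icc.diff measurableSet_iUnion_gap

lemma volume_cantorSet : volume cantorSet = ENNReal.ofReal (1 / 2) := by
  have hsub : ⋃ s, gap s ⊆ Icc 0 1 :=
    iUnion_subset fun s => (gap_subset_interval s).trans (interval_subset_Icc s)
  rw [cantorSet, measure_sdiff hsub measurableSet_iUnion_gap.nullMeasurableSet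
      (by simp [volume_iUnion_gap]),
    volume_iUnion_gap, Real.volume_Icc, ← ENNReal.ofReal_sub _ (by norm_num)]
  norm_num

lemma countable_endpoints : endpoints.Countable :=
  (countable_range left).union (countable_range right)

lemma eq_of_forall_abs_sub_le_intervalLen {x a : ℝ} {m : ℕ}
    (h : ∀ n ≥ m, |x - a| ≤ intervalLen n) : x = a := by
  have := ge_of_tendsto' (tendsto_intervalLen.comp (tendsto_add_atTop_nat m))
    fun n => h (n + m) (Nat.le_add_left m n)
  exact sub_eq_zero.mp (abs_nonpos_iff.mp this)

lemma exists_gapCenter_le {x : ℝ} (hx : x ∈ cantorSet \ endpoints) (m : ℕ) :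
    ∃ n ≥ m, gapCenter (path x n) ≤ x := by
  by_contra! h
  have hleft : ∀ n ≥ m, left (path x n) = left (path x m) := by
    intro n hn
    induction n, hn using Nat.le_induction with
    | base => rfl
    | succ n hn ih => simp [path, lt_asymm (h n hn), ih]
  refine hx.2 (Or.inl ⟨path x m,
    (eq_of_forall_abs_sub_le_intervalLen (m := m) fun n hn => ?_).symm⟩)
  obtain ⟨hl, hr⟩ := mem_interval_path hx.1 n
  simp only [right, hleft n hn, length_path] at hl hr
  rw [abs_le]
  constructor <;> linarith [intervalLen_pos n]

lemma exists_le_gapCenter {x : ℝ} (hx : x ∈ cantorSet \ endpoints) (m : ℕ) :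
    ∃ n ≥ m, x ≤ gapCenter (path x n) := by
  by_contra! h
  have hright : ∀ n ≥ m, right (path x n) = right (path x m) := by
    intro n hn
    induction n, hn using Nat.le_induction with
    | base => rfl
    | succ n hn ih => simp [path, h n hn, ih]
  refine hx.2 (Or.inr ⟨path x m,
    (eq_of_forall_abs_sub_le_intervalLen (m := m) fun n hn => ?_).symm⟩)
  obtain ⟨hl, hr⟩ := mem_interval_path hx.1 n
  have hlen : right (path x n) = left (path x n) + intervalLen n := by simp [right]
  rw [abs_le]
  constructor <;> linarith [hright n hn, intervalLen_pos n]

def bump (s : List Bool) : ℝ → ℝ :=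
  parabolicBump (gapCenter s) (gapLen s.length / 2) (height s.length)

def bumps (y : ℝ) : ℝ := ∑' s, bump s y

lemma summable_height_length : Summable fun s : List Bool => height s.length := by
  have hsum : Summable fun n => 2 ^ n * height n := by
    refine (summable_geometric_of_lt_one (r := 2 / 3) (by norm_num) (by norm_num)).mul_left
      (1 / 3) |>.congr fun n => ?_
    rw [height, pow_succ, div_pow, one_div_pow]; field_simp
  have := ENNReal.summable_toReal
    ((tsum_ofReal_comp_length (fun n => (height_pos n).le) hsum).trans_ne ENNReal.ofReal_ne_top)
  simpa [ENNReal.toReal_ofReal (height_pos _).le] using this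

lemma bump_nonneg (s : List Bool) (y : ℝ) : 0 ≤ bump s y :=
  parabolicBump_nonneg (height_pos _).le y

lemma bump_le_height (s : List Bool) (y : ℝ) : bump s y ≤ height s.length :=
  parabolicBump_le (height_pos _).le y

lemma bump_eq_zero {s : List Bool} {y : ℝ} (hy : y ∉ gap s) : bump s y = 0 :=
  parabolicBump_eq_zero (half_pos (gapLen_pos _)) hy

lemma summable_bump (y : ℝ) : Summable fun s => bump s y :=
  summable_height_length.of_nonneg_of_le (bump_nonneg · y) (bump_le_height · y)

lemma continuous_bumps : Continuous bumps :=
  continuous_tsum (fun _ => continuous_parabolicBump _ _ _) summable_height_length fun s y => by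
    rw [Real.norm_of_nonneg (bump_nonneg s y)]
    exact bump_le_height s y

lemma bumps_nonneg (y : ℝ) : 0 ≤ bumps y :=
  tsum_nonneg (bump_nonneg · y)

lemma bump_le_bumps (s : List Bool) (y : ℝ) : bump s y ≤ bumps y :=
  (summable_bump y).le_tsum s fun t _ => bump_nonneg t y

lemma bumps_eq_bump {s : List Bool} {x : ℝ} (hx : x ∈ gap s) : bumps x = bump s x :=
  tsum_eq_single s fun _ hts =>
    bump_eq_zero fun hxt => Set.disjoint_left.mp (pairwise_disjoint_gap hts) hxt hx

lemma bumps_eq_zero {x : ℝ} (hx : x ∉ ⋃ s, gap s) : bumps x = 0 := by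
  simp only [mem_iUnion, not_exists] at hx
  simp [bumps, bump_eq_zero (hx _)]

lemma bumps_gapCenter (s : List Bool) : bumps (gapCenter s) = height s.length := by
  rw [bumps_eq_bump (Metric.mem_ball_self (half_pos (gapLen_pos _))), bump, parabolicBump_self]

lemma exists_quadratic_lower_bound (x : ℝ) :
    ∃ ξ C : ℝ, ∀ y, -C * (y - x) ^ 2 ≤ bumps y - bumps x - ξ * (y - x) := by
  by_cases hx : x ∈ ⋃ s, gap s
  · obtain ⟨s, hs⟩ := mem_iUnion.mp hx
    refine ⟨-(2 * height s.length * (x - gapCenter s) / (gapLen s.length / 2) ^ 2), _,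
      fun y => (neg_mul_sq_le_parabolicBump_sub (height_pos s.length).le hs y).trans ?_⟩
    have hx := bumps_eq_bump hs
    have hy := bump_le_bumps s y
    rw [bump] at hx hy
    linarith
  · refine ⟨0, 0, fun y => ?_⟩
    simp [bumps_eq_zero hx, bumps_nonneg y]

lemma abs_sub_le_intervalLen_of_mem_interval {s : List Bool} {x y : ℝ} (hx : x ∈ interval s)
    (hy : y ∈ interval s) : |y - x| ≤ intervalLen s.length := by
  simp only [interval, right, mem_Icc] at hx hy
  rw [abs_le]
  constructor <;> linarith

lemma exists_large_second_difference_quotient {x : ℝ} (hx : x ∈ cantorSet \ endpoints)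
    (ξ M δ : ℝ) (hδ : 0 < δ) :
    ∃ y, y ≠ x ∧ |y - x| < δ ∧ M < (bumps y - bumps x - ξ * (y - x)) / (y - x) ^ 2 := by
  obtain ⟨m, hm⟩ := eventually_atTop.mp ((tendsto_intervalLen.eventually (gt_mem_nhds hδ)).and
    (tendsto_height_div_intervalLen_sq.eventually_gt_atTop M))
  obtain ⟨n, hn, hside⟩ : ∃ n ≥ m, ξ * (gapCenter (path x n) - x) ≤ 0 := by
    rcases le_total 0 ξ with hξ | hξ
    · obtain ⟨n, hn, h⟩ := exists_gapCenter_le hx m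
      exact ⟨n, hn, mul_nonpos_of_nonneg_of_nonpos hξ (by linarith)⟩
    · obtain ⟨n, hn, h⟩ := exists_le_gapCenter hx m
      exact ⟨n, hn, mul_nonpos_of_nonpos_of_nonneg hξ (by linarith)⟩
  set y := gapCenter (path x n)
  have hy : y ∈ gap (path x n) := Metric.mem_ball_self (half_pos (gapLen_pos _))
  have hx_gap : x ∉ ⋃ s, gap s := hx.1.2
  have hyx : y ≠ x := fun h => hx_gap (mem_iUnion_of_mem _ (h ▸ hy))
  have hdist : |y - x| ≤ intervalLen n := by
    simpa using abs_sub_le_intervalLen_of_mem_interval (mem_interval_path hx.1 n)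
      (gap_subset_interval _ hy)
  have hsq : 0 < (y - x) ^ 2 := by positivity
  refine ⟨y, hyx, hdist.trans_lt (hm n hn).1, ?_⟩
  calc M < height n / intervalLen n ^ 2 := (hm n hn).2
    _ ≤ height n / (y - x) ^ 2 :=
        div_le_div_of_nonneg_left (height_pos n).le hsq
          (sq_le_sq' (abs_le.mp hdist).1 (abs_le.mp hdist).2)
    _ ≤ (bumps y - bumps x - ξ * (y - x)) / (y - x) ^ 2 := by
        rw [bumps_gapCenter, length_path, bumps_eq_zero hx_gap]
        gcongr
        linarith

end

end FatCantor

/-- There is a continuous function on `ℝ` satisfying the second-order proximal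
liminf condition at every point, but failing the corresponding limsup condition
on a set of measure `1/2`. -/
theorem liminf2_not_implies_limsup2 :
    ∃ f : ℝ → ℝ, Continuous f ∧
      (∀ x : ℝ, ∃ ξ : ℝ, ∃ C : ℝ, ∃ δ : ℝ, 0 < δ ∧ ∀ y : ℝ, |y - x| < δ →
        f y - f x - ξ * (y - x) ≥ -C * (y - x) ^ 2) ∧
      ∃ S : Set ℝ, MeasurableSet S ∧ S ⊆ Set.Icc (0 : ℝ) 1 ∧
        volume S = ENNReal.ofReal (1 / 2) ∧
        ∀ x ∈ S, ∀ ξ : ℝ, ∀ M : ℝ, ∀ δ : ℝ, 0 < δ → ∃ y : ℝ, y ≠ x ∧ |y - x| < δ ∧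
          (f y - f x - ξ * (y - x)) / (y - x) ^ 2 > M := by
  refine ⟨FatCantor.bumps, FatCantor.continuous_bumps, fun x => ?_,
    FatCantor.cantorSet \ FatCantor.endpoints,
    FatCantor.measurableSet_cantorSet.diff FatCantor.countable_endpoints.measurableSet,
    fun x hx => hx.1.1, ?_,
    fun x hx ξ M δ hδ => FatCantor.exists_large_second_difference_quotient hx ξ M δ hδ⟩
  · obtain ⟨ξ, C, h⟩ := FatCantor.exists_quadratic_lower_bound x
    exact ⟨ξ, C, 1, one_pos, fun y _ => h y⟩
  · rw [measure_sdiff_null (FatCantor.countable_endpoints.measure_zero _),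
      FatCantor.volume_cantorSet]
end
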